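/- arXiv:2202.03780 — 4 statements merged into one kernel-verified Lean document; each statement's English description precedes it below -/
import Mathlib

section
/- Let T be a compact irreducible positive operator on a Banach lattice E with principal eigenvector u (so Tu = spr(T)·u, u > 0, ‖u‖ = 1, spr(T) > 0), and let φ > 0 be a positive eigenfunctional of the adjoint with T'φ = spr(T)·φ. If u is a quasi-interior point, then φ is strictly positive, i.e., v ≥ 0 and ⟨v, φ⟩ = 0 imply v = 0. -/
open Filter

theorem Function.apply_iterate_of_apply_eq_mul {α M : Type*} [Monoid M] {T : α → α}
    {φ : α → M} {r : M} (h : ∀ x, φ (T x) = r * φ x) (n : ℕ) (x : α) :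
    φ (T^[n] x) = r ^ n * φ x := by
  induction n with
  | zero => simp
  | succ n ih => rw [Function.iterate_succ_apply', h, ih, pow_succ', mul_assoc]

theorem stmt_5_general {E : Type*} [NormedAddCommGroup E] [Lattice E] [NormedSpace ℝ E]
    (T : E →L[ℝ] E)
    (hirr : ∀ v : E, 0 < v → ∀ ψ : E →L[ℝ] ℝ, (∀ f : E, 0 ≤ f → 0 ≤ ψ f) → ψ ≠ 0 →
      ∃ n : ℕ, 0 < ψ ((T ^ n) v))
    (r : ℝ)
    (φ : E →L[ℝ] ℝ) (hφpos : ∀ f : E, 0 ≤ f → 0 ≤ φ f) (hφ0 : φ ≠ 0)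
    (hφeig : ∀ x : E, φ (T x) = r * φ x) :
    ∀ v : E, 0 ≤ v → φ v = 0 → v = 0 := by
  intro v hv hφv
  by_contra hne
  obtain ⟨n, hn⟩ := hirr v (lt_of_le_of_ne hv (Ne.symm hne)) φ hφpos hφ0
  rw [pow_apply_eq_iterate, Function.apply_iterate_of_apply_eq_mul hφeig, hφv,
    mul_zero] at hn
  exact hn.false

/-- If `T` is compact, positive, irreducible with principal eigenvector `u`
(a quasi-interior point) and `φ > 0` is a positive eigenfunctional of the
adjoint for the spectral radius, then `φ` is strictly positive. -/
theorem stmt_5 {E : Type*} [NormedAddCommGroup E] [Lattice E] [HasSolidNorm E]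
    [IsOrderedAddMonoid E] [NormedSpace ℝ E]
    [CompleteSpace E]
    (T : E →L[ℝ] E)
    (hT : ∀ f : E, 0 ≤ f → 0 ≤ T f)
    (hcomp : IsCompactOperator T)
    (hirr : ∀ v : E, 0 < v → ∀ ψ : E →L[ℝ] ℝ, (∀ f : E, 0 ≤ f → 0 ≤ ψ f) → ψ ≠ 0 →
      ∃ n : ℕ, 0 < ψ ((T ^ n) v))
    (r : ℝ) (hr : 0 < r) (hspr : spectralRadius ℝ T = ENNReal.ofReal r)
    (u : E) (hu : 0 < u) (hun : ‖u‖ = 1) (hueig : T u = r • u)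
    (hqi : ∀ f : E, 0 ≤ f → Tendsto (fun n : ℕ => f ⊓ (n • u)) atTop (nhds f))
    (φ : E →L[ℝ] ℝ) (hφpos : ∀ f : E, 0 ≤ f → 0 ≤ φ f) (hφ0 : φ ≠ 0)
    (hφeig : ∀ x : E, φ (T x) = r * φ x) :
    ∀ v : E, 0 ≤ v → φ v = 0 → v = 0 :=
  stmt_5_general T hirr r φ hφpos hφ0 hφeig
end

section
/- Let E = L^p(Ω), 1 ≤ p < ∞, let -A generate a C₀-semigroup with compact resolvent R = (ωI + A + m)^{-1} at some point ω in the resolvent set, and suppose m_n → m weak* in L^∞(Ω) with the resolvents R_n = (ωI + A + m_n)^{-1} uniformly bounded in operator norm. Then ‖R C_n R‖ → 0, where C_n is multiplication by m_n − m, and consequently R_n → R in operator norm. -/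
/-!
For `p < ∞` and a finite measure, a functional `θ` on `Lᵖ` and a fixed `w ∈ Lᵖ` give the signed
measure `S ↦ θ (1_S w)`; its Radon–Nikodym density `f` is integrable and `θ (c w) = ∫ c f` for
every bounded `c`. Weak* convergence `mₙ → m` therefore makes `Cₙ w` converge weakly to `0`, and
the compact `R` turns this into `R Cₙ w → 0` in norm. The `R Cₙ` being uniformly bounded, this
convergence is uniform on the relatively compact set `R (unit ball)`, i.e. `‖R Cₙ R‖ → 0`.
Finally the second resolvent identity `Rₙ = R - Rₙ Cₙ R`, substituted into itself, gives
`‖Rₙ - R‖ ≤ (1 + ‖Rₙ‖ ‖Cₙ‖) ‖R Cₙ R‖`.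
-/

open MeasureTheory Filter

open Filter Set

/-- A `C₀`-semigroup of bounded operators on `E` (for times `t ≥ 0`). -/
structure C0Semigroup (E : Type*) [NormedAddCommGroup E] [NormedSpace ℝ E] where
  toFun : ℝ → E →L[ℝ] E
  map_zero : toFun 0 = 1
  map_add : ∀ s t : ℝ, 0 ≤ s → 0 ≤ t → toFun (s + t) = (toFun s).comp (toFun t)
  strong_cont : ∀ u : E, ContinuousOn (fun t => toFun t u) (Ici 0)

/-- `-A` is the generator of the semigroup `T`:
`A u = lim_{t↓0} (u - T(t)u)/t` on its (maximal) domain. -/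
def IsNegGenerator {E : Type*} [NormedAddCommGroup E] [NormedSpace ℝ E]
    (T : C0Semigroup E) (A : E →ₗ.[ℝ] E) : Prop :=
  (∀ u : A.domain, Tendsto (fun t : ℝ => t⁻¹ • ((u : E) - T.toFun t u))
      (nhdsWithin 0 (Ioi 0)) (nhds (A u))) ∧
    ∀ v : E, (∃ L : E, Tendsto (fun t : ℝ => t⁻¹ • (v - T.toFun t v))
      (nhdsWithin 0 (Ioi 0)) (nhds L)) → v ∈ A.domain

/-- `R` is the resolvent `(μ + A)⁻¹` of the unbounded operator `A`. -/
structure IsResolventOf {E : Type*} [NormedAddCommGroup E] [NormedSpace ℝ E]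
    (A : E →ₗ.[ℝ] E) (μ : ℝ) (R : E →L[ℝ] E) : Prop where
  mem : ∀ f : E, R f ∈ A.domain
  right_inv : ∀ f : E, μ • R f + A ⟨R f, mem f⟩ = f
  left_inv : ∀ u : A.domain, R (μ • (u : E) + A u) = (u : E)

/-- The perturbation `A + M` of `A` by a bounded operator `M`. -/
def pmapAdd {E : Type*} [NormedAddCommGroup E] [NormedSpace ℝ E]
    (A : E →ₗ.[ℝ] E) (M : E →L[ℝ] E) : E →ₗ.[ℝ] E :=
  ⟨A.domain, A.toFun + (M : E →ₗ[ℝ] E).comp A.domain.subtype⟩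

open scoped ENNReal

open scoped Topology
open ContinuousLinearMap Function

theorem norm_sub_le_of_eq_add_mul_mul {𝓐 : Type*} [NormedRing 𝓐] {X R Q : 𝓐}
    (h : X = R + X * Q * R) : ‖X - R‖ ≤ (1 + ‖X‖ * ‖Q‖) * ‖R * Q * R‖ := by
  have hsplit : X - R = R * Q * R + X * Q * (R * Q * R) := by
    calc X - R = X * Q * R := by rw [sub_eq_iff_eq_add']; exact h
      _ = _ := by nth_rw 1 [h]; noncomm_ring
  calc ‖X - R‖ ≤ ‖R * Q * R‖ + ‖X‖ * ‖Q‖ * ‖R * Q * R‖ := by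
        rw [hsplit]
        exact norm_add_le_of_le le_rfl ((norm_mul_le _ _).trans
          (mul_le_mul_of_nonneg_right (norm_mul_le _ _) (norm_nonneg _)))
    _ = (1 + ‖X‖ * ‖Q‖) * ‖R * Q * R‖ := by ring

theorem pmapAdd_apply {E : Type*} [NormedAddCommGroup E] [NormedSpace ℝ E]
    {A : E →ₗ.[ℝ] E} {M : E →L[ℝ] E} (u : (pmapAdd A M).domain) :
    pmapAdd A M u = A ⟨u, u.2⟩ + M u :=
  rfl

namespace IsResolventOf

variable {E : Type*} [NormedAddCommGroup E] [NormedSpace ℝ E] {A : E →ₗ.[ℝ] E} {ω : ℝ}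
  {M M' R R' : E →L[ℝ] E}

theorem eq_add_mul_sub_mul (hR : IsResolventOf (pmapAdd A M) ω R)
    (hR' : IsResolventOf (pmapAdd A M') ω R') : R' = R + R' * (M - M') * R := by
  ext f
  have hshift : ω • R f + pmapAdd A M' ⟨R f, hR.mem f⟩
      = ω • R f + pmapAdd A M ⟨R f, hR.mem f⟩ + (M' - M) (R f) := by
    rw [pmapAdd_apply, pmapAdd_apply, sub_apply]
    abel
  have h := hR'.left_inv ⟨R f, hR.mem f⟩
  rw [hshift, hR.right_inv, map_add] at h
  rw [add_apply, mul_apply_eq_comp, mul_apply_eq_comp, ← neg_sub M', neg_apply, map_neg]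
  exact eq_add_neg_of_add_eq h

theorem tendsto_of_tendsto_norm_comp_sub_comp (hR : IsResolventOf (pmapAdd A M) ω R)
    {Mn Rn : ℕ → E →L[ℝ] E} (hRn : ∀ n, IsResolventOf (pmapAdd A (Mn n)) ω (Rn n)) {K B : ℝ}
    (hK : ∀ n, ‖Rn n‖ ≤ K) (hB : ∀ n, ‖Mn n - M‖ ≤ B)
    (h : Tendsto (fun n => ‖R.comp ((Mn n - M).comp R)‖) atTop (𝓝 0)) :
    Tendsto Rn atTop (𝓝 R) := by
  have hK0 : 0 ≤ K := (norm_nonneg _).trans (hK 0)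
  rw [tendsto_iff_norm_sub_tendsto_zero]
  refine squeeze_zero (fun _ => norm_nonneg _) (fun n => ?_)
    (by simpa only [mul_zero] using h.const_mul (1 + K * B))
  calc ‖Rn n - R‖ ≤ (1 + ‖Rn n‖ * ‖M - Mn n‖) * ‖R * (M - Mn n) * R‖ :=
        norm_sub_le_of_eq_add_mul_mul (hR.eq_add_mul_sub_mul (hRn n))
    _ ≤ (1 + K * B) * ‖R.comp ((Mn n - M).comp R)‖ := by
        rw [← neg_sub, mul_neg, neg_mul, norm_neg, norm_neg, mul_assoc]
        exact mul_le_mul_of_nonneg_right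
          (add_le_add_right (mul_le_mul (hK n) (hB n) (norm_nonneg _) hK0) 1) (norm_nonneg _)

end IsResolventOf

section CompactOperator

variable {𝕜 E F G : Type*} [RCLike 𝕜] [NormedAddCommGroup E] [NormedSpace 𝕜 E]
  [NormedAddCommGroup F] [NormedSpace 𝕜 F] [NormedAddCommGroup G] [NormedSpace 𝕜 G]

theorem IsCompactOperator.tendsto_zero_of_forall_dual {R : E →L[𝕜] F} (hR : IsCompactOperator R)
    {x : ℕ → E} {B : ℝ} (hxB : ∀ n, ‖x n‖ ≤ B)
    (hx : ∀ θ : StrongDual 𝕜 E, Tendsto (fun n => θ (x n)) atTop (𝓝 0)) :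
    Tendsto (fun n => R (x n)) atTop (𝓝 0) := by
  have hK := hR.isCompact_closure_image_closedBall B
  have hmem : ∀ n, R (x n) ∈ closure (R '' Metric.closedBall 0 B) := fun n =>
    subset_closure ⟨x n, by simpa using hxB n, rfl⟩
  refine tendsto_of_subseq_tendsto fun ns hns => ?_
  obtain ⟨z, -, φ, hφ, hz⟩ := hK.tendsto_subseq fun j => hmem (ns j)
  suffices z = 0 from ⟨φ, this ▸ hz⟩
  refine SeparatingDual.eq_zero_of_forall_dual_eq_zero (R := 𝕜) fun ψ => ?_
  exact tendsto_nhds_unique ((ψ.continuous.tendsto z).comp hz)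
    ((hx (ψ.comp R)).comp (hns.comp hφ.tendsto_atTop))

theorem eventually_forall_norm_lt_of_isCompact {Q : ℕ → E →L[𝕜] F} {B : ℝ} (hQB : ∀ n, ‖Q n‖ ≤ B)
    (hQ : ∀ y, Tendsto (fun n => Q n y) atTop (𝓝 0)) {K : Set E} (hK : IsCompact K) {ε : ℝ}
    (hε : 0 < ε) : ∀ᶠ n in atTop, ∀ y ∈ K, ‖Q n y‖ < ε := by
  have hB : 0 ≤ B := (norm_nonneg _).trans (hQB 0)
  set δ := ε / (2 * (B + 1))
  have hδ : 0 < δ := by positivity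
  have hBδ : B * δ < ε / 2 := by
    rw [mul_div_assoc', div_lt_div_iff₀ (by positivity) two_pos]
    nlinarith
  obtain ⟨t, -, htfin, hKt⟩ := finite_cover_balls_of_compact hK hδ
  have hnet : ∀ᶠ n in atTop, ∀ y ∈ t, ‖Q n y‖ < ε / 2 :=
    (eventually_all_finite htfin).2 fun y _ =>
      (hQ y).norm.eventually_lt_const (by rw [norm_zero]; positivity)
  filter_upwards [hnet] with n hn z hz
  obtain ⟨y, hyt, hzy⟩ := mem_iUnion₂.1 (hKt hz)
  calc ‖Q n z‖ = ‖Q n y + Q n (z - y)‖ := by rw [← map_add, add_sub_cancel]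
    _ ≤ ‖Q n y‖ + B * ‖z - y‖ :=
      norm_add_le_of_le le_rfl ((Q n).le_of_opNorm_le (hQB n) _)
    _ < ε := by
      have hy := hn y hyt
      have hzy' : B * ‖z - y‖ ≤ B * δ := mul_le_mul_of_nonneg_left (mem_ball_iff_norm.1 hzy).le hB
      linarith

theorem tendsto_norm_comp_of_isCompactOperator {R : E →L[𝕜] F} (hR : IsCompactOperator R)
    {Q : ℕ → F →L[𝕜] G} {B : ℝ} (hQB : ∀ n, ‖Q n‖ ≤ B)
    (hQ : ∀ y, Tendsto (fun n => Q n y) atTop (𝓝 0)) :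
    Tendsto (fun n => ‖(Q n).comp R‖) atTop (𝓝 0) := by
  refine Metric.tendsto_nhds.2 fun ε hε => ?_
  filter_upwards [eventually_forall_norm_lt_of_isCompact hQB hQ
    (hR.isCompact_closure_image_closedBall 1) (half_pos hε)] with n hn
  rw [Real.dist_0_eq_abs, abs_norm]
  refine (opNorm_le_of_unit_norm (half_pos hε).le fun x hx => ?_).trans_lt (half_lt_self hε)
  exact (hn (R x) (subset_closure ⟨x, by simp [hx], rfl⟩)).le

theorem tendsto_norm_comp_comp_of_isCompactOperator {S : F →L[𝕜] G} {R : E →L[𝕜] F}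
    (hS : IsCompactOperator S) (hR : IsCompactOperator R) {C : ℕ → F →L[𝕜] F} {B : ℝ}
    (hCB : ∀ n, ‖C n‖ ≤ B)
    (hC : ∀ (θ : StrongDual 𝕜 F) y, Tendsto (fun n => θ (C n y)) atTop (𝓝 0)) :
    Tendsto (fun n => ‖S.comp ((C n).comp R)‖) atTop (𝓝 0) :=
  tendsto_norm_comp_of_isCompactOperator hR (Q := fun n => S.comp (C n))
    (fun n => (S.opNorm_comp_le _).trans (mul_le_mul_of_nonneg_left (hCB n) (norm_nonneg S)))
    fun y => hS.tendsto_zero_of_forall_dual (fun n => (C n).le_of_opNorm_le (hCB n) y)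
      fun θ => hC θ y

end CompactOperator

namespace MeasureTheory

theorem unifIntegrable_of_ae_norm_le {α ι β : Type*} [MeasurableSpace α] {μ : Measure α}
    {p : ℝ≥0∞} [NormedAddCommGroup β] {F : ι → α → β} {g : α → ℝ} (hp₁ : 1 ≤ p) (hp : p ≠ ∞)
    (hg : MemLp g p μ) (hFg : ∀ i, ∀ᵐ x ∂μ, ‖F i x‖ ≤ g x) : UnifIntegrable F p μ := by
  intro ε hε
  obtain ⟨δ, hδ, hsmall⟩ := hg.eLpNorm_indicator_le hp₁ hp hε
  refine ⟨δ, hδ, fun i s hs hμs => (eLpNorm_mono_ae ?_).trans (hsmall s hs hμs)⟩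
  filter_upwards [hFg i] with x hx
  by_cases hxs : x ∈ s
  · simpa [hxs] using hx.trans (le_abs_self _)
  · simp [hxs]

section IndicatorLp

variable {α E : Type*} [MeasurableSpace α] {μ : Measure α} {p : ℝ≥0∞} [NormedAddCommGroup E]

open scoped Classical in
noncomputable def indicatorLp (w : Lp E p μ) (S : Set α) : Lp E p μ :=
  if hS : MeasurableSet S then ((Lp.memLp w).indicator hS).toLp (S.indicator w) else 0

theorem coeFn_indicatorLp (w : Lp E p μ) {S : Set α} (hS : MeasurableSet S) :
    indicatorLp w S =ᵐ[μ] S.indicator w := by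
  rw [indicatorLp, dif_pos hS]
  exact MemLp.coeFn_toLp _

theorem indicatorLp_of_not_measurableSet (w : Lp E p μ) {S : Set α} (hS : ¬MeasurableSet S) :
    indicatorLp w S = 0 := by
  rw [indicatorLp, dif_neg hS]

theorem indicatorLp_of_measure_eq_zero (w : Lp E p μ) {S : Set α} (hS : μ S = 0) :
    indicatorLp w S = 0 := by
  by_cases hSm : MeasurableSet S
  · rw [Lp.eq_zero_iff_ae_eq_zero]
    exact (coeFn_indicatorLp w hSm).trans (indicator_meas_zero hS)
  · exact indicatorLp_of_not_measurableSet w hSm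

theorem indicatorLp_union (w : Lp E p μ) {S T : Set α} (hS : MeasurableSet S)
    (hT : MeasurableSet T) (hST : Disjoint S T) :
    indicatorLp w (S ∪ T) = indicatorLp w S + indicatorLp w T := by
  refine Lp.ext ?_
  filter_upwards [coeFn_indicatorLp w (hS.union hT), coeFn_indicatorLp w hS,
    coeFn_indicatorLp w hT, Lp.coeFn_add (indicatorLp w S) (indicatorLp w T)] with x h h₁ h₂ hsum
  rw [h, hsum, Pi.add_apply, h₁, h₂, indicator_union_of_disjoint hST]

theorem indicatorLp_biUnion (w : Lp E p μ) {S : ℕ → Set α} (hS : ∀ i, MeasurableSet (S i))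
    (hd : Pairwise (Disjoint on S)) (F : Finset ℕ) :
    indicatorLp w (⋃ i ∈ F, S i) = ∑ i ∈ F, indicatorLp w (S i) := by
  classical
  induction F using Finset.induction_on with
  | empty => simpa using indicatorLp_of_measure_eq_zero w measure_empty
  | insert a F ha ih =>
    rw [Finset.set_biUnion_insert, Finset.sum_insert ha, ← ih,
      indicatorLp_union w (hS a) (F.measurableSet_biUnion fun i _ => hS i)]
    exact disjoint_iUnion₂_right.2 fun i hi => hd fun h => ha (h ▸ hi)

theorem norm_indicatorLp [Fact (1 ≤ p)] (w : Lp E p μ) {S : Set α} (hS : MeasurableSet S) :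
    ‖indicatorLp w S‖ = (eLpNorm (S.indicator w) p μ).toReal := by
  rw [Lp.norm_def, eLpNorm_congr_ae (coeFn_indicatorLp w hS)]

theorem tendsto_indicatorLp_zero [Fact (1 ≤ p)] (hp : p ≠ ∞) (w : Lp E p μ) {ι : Type*}
    {l : Filter ι} {T : ι → Set α} (hT : ∀ i, MeasurableSet (T i))
    (hμT : Tendsto (fun i => μ (T i)) l (𝓝 0)) :
    Tendsto (fun i => indicatorLp w (T i)) l (𝓝 0) := by
  rw [tendsto_zero_iff_norm_tendsto_zero, Metric.tendsto_nhds]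
  intro ε hε
  obtain ⟨δ, hδ, hsmall⟩ := (Lp.memLp w).eLpNorm_indicator_le Fact.out hp (half_pos hε)
  filter_upwards [hμT.eventually (ge_mem_nhds (ENNReal.ofReal_pos.2 hδ))] with i hi
  rw [Real.dist_0_eq_abs, abs_norm, norm_indicatorLp w (hT i)]
  refine lt_of_le_of_lt ?_ (half_lt_self hε)
  exact ENNReal.toReal_le_of_le_ofReal (half_pos hε).le (hsmall _ (hT i) hi)

theorem hasSum_indicatorLp_iUnion [Fact (1 ≤ p)] [IsFiniteMeasure μ] (hp : p ≠ ∞) (w : Lp E p μ)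
    {S : ℕ → Set α} (hS : ∀ i, MeasurableSet (S i)) (hd : Pairwise (Disjoint on S)) :
    HasSum (fun i => indicatorLp w (S i)) (indicatorLp w (⋃ i, S i)) := by
  have hrest : ∀ F : Finset ℕ, MeasurableSet ((⋃ i, S i) \ ⋃ i ∈ F, S i) := fun F =>
    (MeasurableSet.iUnion hS).diff (F.measurableSet_biUnion fun i _ => hS i)
  have hsplit : ∀ F : Finset ℕ, ∑ i ∈ F, indicatorLp w (S i)
      = indicatorLp w (⋃ i, S i) - indicatorLp w ((⋃ i, S i) \ ⋃ i ∈ F, S i) := by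
    intro F
    rw [eq_sub_iff_add_eq, ← indicatorLp_biUnion w hS hd,
      ← indicatorLp_union w (F.measurableSet_biUnion fun i _ => hS i) (hrest F)
        disjoint_sdiff_right,
      union_sdiff_cancel (iUnion₂_subset fun i _ => subset_iUnion S i)]
  have htail : Tendsto (fun F : Finset ℕ => μ ((⋃ i, S i) \ ⋃ i ∈ F, S i)) atTop (𝓝 0) := by
    refine tendsto_of_tendsto_of_tendsto_of_le_of_le tendsto_const_nhds
      (ENNReal.tendsto_tsum_compl_atTop_zero (f := fun i => μ (S i)) ?_) (fun _ => zero_le)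
      fun F => ?_
    · rw [← measure_iUnion hd hS]
      exact measure_ne_top μ _
    · refine (measure_mono fun x hx => ?_).trans (measure_iUnion_le _)
      obtain ⟨i, hi⟩ := mem_iUnion.1 hx.1
      exact mem_iUnion.2 ⟨⟨i, fun hiF => hx.2 (mem_biUnion hiF hi)⟩, hi⟩
  have := (tendsto_indicatorLp_zero hp w hrest htail).const_sub (indicatorLp w (⋃ i, S i))
  rw [sub_zero] at this
  exact this.congr fun F => (hsplit F).symm

noncomputable def indicatorVectorMeasure [Fact (1 ≤ p)] [IsFiniteMeasure μ] (hp : p ≠ ∞)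
    (w : Lp E p μ) : VectorMeasure α (Lp E p μ) where
  measureOf' := indicatorLp w
  empty' := indicatorLp_of_measure_eq_zero w measure_empty
  not_measurable' _ hS := indicatorLp_of_not_measurableSet w hS
  m_iUnion' _ hS hd := hasSum_indicatorLp_iUnion hp w hS hd

end IndicatorLp

section Representation

variable {α : Type*} [MeasurableSpace α] {μ : Measure α} {p : ℝ≥0∞} [Fact (1 ≤ p)]

theorem exists_integrable_setIntegral_eq_apply_indicatorLp [IsFiniteMeasure μ] (hp : p ≠ ∞)
    (θ : StrongDual ℝ (Lp ℝ p μ)) (w : Lp ℝ p μ) :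
    ∃ f : α → ℝ, Integrable f μ ∧
      ∀ S, MeasurableSet S → ∫ x in S, f x ∂μ = θ (indicatorLp w S) := by
  set ν : SignedMeasure α := (indicatorVectorMeasure hp w).mapRange
    θ.toLinearMap.toAddMonoidHom θ.continuous
  have hν : ∀ S, ν S = θ (indicatorLp w S) := fun S => rfl
  have hac : ν ≪ᵥ μ.toENNRealVectorMeasure := .mk fun S hS h0 => by
    rw [Measure.toENNRealVectorMeasure_apply_measurable hS] at h0
    rw [hν, indicatorLp_of_measure_eq_zero w h0, map_zero]
  refine ⟨ν.rnDeriv μ, ν.integrable_rnDeriv μ, fun S hS => ?_⟩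
  rw [← withDensityᵥ_apply (ν.integrable_rnDeriv μ) hS, ν.withDensityᵥ_rnDeriv_eq μ hac, hν]

variable {θ : StrongDual ℝ (Lp ℝ p μ)} {w : Lp ℝ p μ} {f : α → ℝ}

theorem apply_eq_integral_mul_of_simpleFunc (hf : Integrable f μ)
    (hθ : ∀ S, MeasurableSet S → ∫ x in S, f x ∂μ = θ (indicatorLp w S)) (c : SimpleFunc α ℝ)
    {v : Lp ℝ p μ} (hv : v =ᵐ[μ] fun x => c x * w x) : θ v = ∫ x, c x * f x ∂μ := by
  induction c using SimpleFunc.induction generalizing v with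
  | @const y S hS =>
    have hv' : v = y • indicatorLp w S := by
      refine Lp.ext ?_
      filter_upwards [hv, coeFn_indicatorLp w hS, Lp.coeFn_smul y (indicatorLp w S)]
        with x h h₁ h₂
      rw [h, h₂, Pi.smul_apply, h₁, SimpleFunc.piecewise_apply]
      by_cases hx : x ∈ S <;> simp [hx]
    have hcf : (fun x => SimpleFunc.piecewise S hS (.const α y) (.const α 0) x * f x)
        = S.indicator fun x => y * f x := by
      ext x
      rw [SimpleFunc.piecewise_apply]
      by_cases hx : x ∈ S <;> simp [hx]
    rw [hv', map_smul, smul_eq_mul, ← hθ S hS, hcf, integral_indicator hS, integral_const_mul]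
  | @add c₁ c₂ _ ih₁ ih₂ =>
    have hm₁ : MemLp (⇑c₁ * ⇑w) p μ := (Lp.memLp w).mul (c₁.memLp_top μ)
    have hm₂ : MemLp (⇑c₂ * ⇑w) p μ := (Lp.memLp w).mul (c₂.memLp_top μ)
    have hv' : v = hm₁.toLp _ + hm₂.toLp _ := by
      refine Lp.ext ?_
      filter_upwards [hv, hm₁.coeFn_toLp, hm₂.coeFn_toLp,
        Lp.coeFn_add (hm₁.toLp _) (hm₂.toLp _)] with x h h₁ h₂ hsum
      rw [h, hsum, Pi.add_apply, h₁, h₂, SimpleFunc.coe_add, Pi.add_apply, Pi.mul_apply,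
        Pi.mul_apply, add_mul]
    rw [hv', map_add, ih₁ hm₁.coeFn_toLp, ih₂ hm₂.coeFn_toLp]
    simp only [SimpleFunc.coe_add, Pi.add_apply, add_mul]
    exact (integral_add (hf.simpleFunc_mul c₁) (hf.simpleFunc_mul c₂)).symm

theorem apply_eq_integral_mul_of_measurable [IsFiniteMeasure μ] (hp : p ≠ ∞)
    (hf : Integrable f μ) (hθ : ∀ S, MeasurableSet S → ∫ x in S, f x ∂μ = θ (indicatorLp w S))
    {c : α → ℝ} (hc : Measurable c) {B : ℝ} (hcB : ∀ᵐ x ∂μ, |c x| ≤ B) {v : Lp ℝ p μ}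
    (hv : v =ᵐ[μ] fun x => c x * w x) : θ v = ∫ x, c x * f x ∂μ := by
  set ck := SimpleFunc.approxOn c hc univ 0 (mem_univ 0)
  have hlim : ∀ x, Tendsto (fun k => ck k x) atTop (𝓝 (c x)) := fun x =>
    SimpleFunc.tendsto_approxOn hc (mem_univ 0) (by simp)
  have hbound : ∀ k, ∀ᵐ x ∂μ, ‖ck k x‖ ≤ 2 * B := fun k => hcB.mono fun x hx => by
    have := SimpleFunc.norm_approxOn_zero_le hc (mem_univ 0) x k
    rw [Real.norm_eq_abs (c x)] at this
    linarith
  have hmk : ∀ k, MemLp (⇑(ck k) * ⇑w) p μ := fun k => (Lp.memLp w).mul ((ck k).memLp_top μ)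
  have hLp : Tendsto (fun k => (hmk k).toLp _) atTop (𝓝 v) := by
    rw [← Lp.toLp_coeFn v (Lp.memLp v), Lp.tendsto_Lp_iff_tendsto_eLpNorm'']
    refine tendsto_Lp_finite_of_tendsto_ae Fact.out hp (fun k => (hmk k).1) (Lp.memLp v)
      (unifIntegrable_of_ae_norm_le Fact.out hp ((Lp.memLp w).norm.const_mul (2 * B))
        fun k => (hbound k).mono fun x hx => ?_) ?_
    · rw [Pi.mul_apply, norm_mul]
      exact mul_le_mul_of_nonneg_right hx (norm_nonneg _)
    · filter_upwards [hv] with x hx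
      rw [hx]
      exact (hlim x).mul_const (w x)
  have hint : Tendsto (fun k => ∫ x, ck k x * f x ∂μ) atTop (𝓝 (∫ x, c x * f x ∂μ)) := by
    refine tendsto_integral_of_dominated_convergence (fun x => 2 * B * ‖f x‖)
      (fun k => (ck k).aestronglyMeasurable.mul hf.1) (hf.norm.const_mul _)
      (fun k => (hbound k).mono fun x hx => ?_) (.of_forall fun x => (hlim x).mul_const (f x))
    rw [norm_mul]
    exact mul_le_mul_of_nonneg_right hx (norm_nonneg _)
  refine tendsto_nhds_unique ?_ hint
  exact ((θ.continuous.tendsto v).comp hLp).congr fun k =>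
    apply_eq_integral_mul_of_simpleFunc hf hθ (ck k) (hmk k).coeFn_toLp

end Representation

section MulOperator

variable {α : Type*} [MeasurableSpace α] {μ : Measure α} {p : ℝ≥0∞} [Fact (1 ≤ p)]

def IsMulOperator (T : Lp ℝ p μ →L[ℝ] Lp ℝ p μ) (c : α → ℝ) : Prop :=
  ∀ u : Lp ℝ p μ, T u =ᵐ[μ] fun x => c x * u x

namespace IsMulOperator

variable {T : Lp ℝ p μ →L[ℝ] Lp ℝ p μ} {c : α → ℝ}

theorem aestronglyMeasurable [IsFiniteMeasure μ] (hT : IsMulOperator T c) :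
    AEStronglyMeasurable c μ := by
  refine (Lp.aestronglyMeasurable (T (Lp.const p μ 1))).congr ?_
  filter_upwards [hT (Lp.const p μ 1), Lp.coeFn_const p μ (1 : ℝ)] with x h h₁
  rw [h, h₁, Function.const_apply, mul_one]

theorem norm_le (hT : IsMulOperator T c) {B : ℝ} (hB : 0 ≤ B) (hcB : ∀ᵐ x ∂μ, |c x| ≤ B) :
    ‖T‖ ≤ B :=
  T.opNorm_le_bound hB fun u => Lp.norm_le_mul_norm_of_ae_le_mul <| by
    filter_upwards [hT u, hcB] with x h hx
    rw [h, norm_mul, Real.norm_eq_abs (c x)]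
    exact mul_le_mul_of_nonneg_right hx (norm_nonneg _)

theorem exists_integrable_forall_apply_eq_integral [IsFiniteMeasure μ] (hp : p ≠ ∞)
    (θ : StrongDual ℝ (Lp ℝ p μ)) (w : Lp ℝ p μ) :
    ∃ f : α → ℝ, Integrable f μ ∧ ∀ (T : Lp ℝ p μ →L[ℝ] Lp ℝ p μ) (c : α → ℝ) (B : ℝ),
      IsMulOperator T c → (∀ᵐ x ∂μ, |c x| ≤ B) → θ (T w) = ∫ x, c x * f x ∂μ := by
  obtain ⟨f, hf, hθ⟩ := exists_integrable_setIntegral_eq_apply_indicatorLp hp θ w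
  refine ⟨f, hf, fun T c B hT hcB => ?_⟩
  have hc := hT.aestronglyMeasurable
  have hcc := hc.ae_eq_mk
  refine (apply_eq_integral_mul_of_measurable hp hf hθ hc.stronglyMeasurable_mk.measurable
    (B := B) ?_ ?_).trans (integral_congr_ae ?_)
  · filter_upwards [hcB, hcc] with x hx h
    rwa [← h]
  · filter_upwards [hT w, hcc] with x hx h
    rw [hx, h]
  · filter_upwards [hcc] with x h
    rw [h]

theorem tendsto_dual_sub_apply [IsFiniteMeasure μ] (hp : p ≠ ∞) {T : ℕ → Lp ℝ p μ →L[ℝ] Lp ℝ p μ}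
    {c : ℕ → α → ℝ} {T₀ : Lp ℝ p μ →L[ℝ] Lp ℝ p μ} {c₀ : α → ℝ}
    (hT : ∀ n, IsMulOperator (T n) (c n)) (hT₀ : IsMulOperator T₀ c₀) {B : ℝ}
    (hcB : ∀ n, ∀ᵐ x ∂μ, |c n x| ≤ B) (hc₀B : ∀ᵐ x ∂μ, |c₀ x| ≤ B)
    (hweak : ∀ g : α → ℝ, Integrable g μ →
      Tendsto (fun n => ∫ x, c n x * g x ∂μ) atTop (𝓝 (∫ x, c₀ x * g x ∂μ)))
    (θ : StrongDual ℝ (Lp ℝ p μ)) (w : Lp ℝ p μ) :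
    Tendsto (fun n => θ ((T n - T₀) w)) atTop (𝓝 0) := by
  obtain ⟨f, hf, hrep⟩ := exists_integrable_forall_apply_eq_integral hp θ w
  have := ((hweak f hf).sub_const (∫ x, c₀ x * f x ∂μ))
  rw [sub_self] at this
  refine this.congr fun n => ?_
  rw [sub_apply, map_sub, hrep (T n) (c n) B (hT n) (hcB n), hrep T₀ c₀ B hT₀ hc₀B]

end IsMulOperator

end MulOperator

end MeasureTheory

theorem stmt_10_general {N : ℕ} (Ω : Set (Fin N → ℝ))
    (hΩb : Bornology.IsBounded Ω)
    (p : ℝ≥0∞) [Fact (1 ≤ p)] (hp : p ≠ ∞)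
    (A : Lp ℝ p (volume.restrict Ω) →ₗ.[ℝ] Lp ℝ p (volume.restrict Ω))
    (ω : ℝ)
    (mn : ℕ → (Fin N → ℝ) → ℝ) (m : (Fin N → ℝ) → ℝ)
    (C : ℝ) (hmbd : ∀ᵐ x ∂(volume.restrict Ω), |m x| ≤ C)
    (hmnbd : ∀ n, ∀ᵐ x ∂(volume.restrict Ω), |mn n x| ≤ C)
    -- weak* convergence in L^∞
    (hweak : ∀ g : (Fin N → ℝ) → ℝ, Integrable g (volume.restrict Ω) →
      Tendsto (fun n => ∫ x, mn n x * g x ∂(volume.restrict Ω)) atTop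
        (nhds (∫ x, m x * g x ∂(volume.restrict Ω))))
    (Mn : ℕ → Lp ℝ p (volume.restrict Ω) →L[ℝ] Lp ℝ p (volume.restrict Ω))
    (M : Lp ℝ p (volume.restrict Ω) →L[ℝ] Lp ℝ p (volume.restrict Ω))
    (hMn : ∀ n, ∀ u : Lp ℝ p (volume.restrict Ω),
      (Mn n u : (Fin N → ℝ) → ℝ) =ᵐ[volume.restrict Ω] fun x => mn n x * (u : (Fin N → ℝ) → ℝ) x)
    (hM : ∀ u : Lp ℝ p (volume.restrict Ω),
      (M u : (Fin N → ℝ) → ℝ) =ᵐ[volume.restrict Ω] fun x => m x * (u : (Fin N → ℝ) → ℝ) x)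
    (R : Lp ℝ p (volume.restrict Ω) →L[ℝ] Lp ℝ p (volume.restrict Ω))
    (hR : IsResolventOf (pmapAdd A M) ω R) (hRcomp : IsCompactOperator R)
    (Rn : ℕ → Lp ℝ p (volume.restrict Ω) →L[ℝ] Lp ℝ p (volume.restrict Ω))
    (hRn : ∀ n, IsResolventOf (pmapAdd A (Mn n)) ω (Rn n))
    (hbdd : ∃ K : ℝ, ∀ n, ‖Rn n‖ ≤ K) :
    Tendsto (fun n => ‖R.comp ((Mn n - M).comp R)‖) atTop (nhds 0) ∧
      Tendsto Rn atTop (nhds R) := by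
  have : IsFiniteMeasure (volume.restrict Ω) :=
    isFiniteMeasure_restrict.2 hΩb.measure_lt_top.ne
  have hC_le : ∀ n, ‖Mn n - M‖ ≤ 2 * max C 0 := fun n => by
    have h₁ := IsMulOperator.norm_le (hMn n) (le_max_right C 0)
      ((hmnbd n).mono fun x hx => hx.trans (le_max_left C 0))
    have h₂ := IsMulOperator.norm_le hM (le_max_right C 0)
      (hmbd.mono fun x hx => hx.trans (le_max_left C 0))
    linarith [norm_sub_le (Mn n) M]
  have hRCR := tendsto_norm_comp_comp_of_isCompactOperator hRcomp hRcomp hC_le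
    (IsMulOperator.tendsto_dual_sub_apply hp hMn hM hmnbd hmbd hweak)
  obtain ⟨K, hK⟩ := hbdd
  exact ⟨hRCR, hR.tendsto_of_tendsto_norm_comp_sub_comp hRn hK hC_le hRCR⟩

/-- Resolvent convergence under weak* convergence of potentials:
if `mₙ → m` weak* in `L^∞`, `R = (ω+A+m)⁻¹` is compact and the resolvents
`Rₙ = (ω+A+mₙ)⁻¹` are uniformly bounded, then `‖R Cₙ R‖ → 0` and `Rₙ → R`
in operator norm, where `Cₙ` is multiplication by `mₙ - m`. -/
theorem stmt_10 {N : ℕ} (Ω : Set (Fin N → ℝ)) (hΩ : IsOpen Ω)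
    (hΩb : Bornology.IsBounded Ω)
    (p : ℝ≥0∞) [Fact (1 ≤ p)] (hp : p ≠ ∞)
    (A : Lp ℝ p (volume.restrict Ω) →ₗ.[ℝ] Lp ℝ p (volume.restrict Ω))
    (ω : ℝ)
    (mn : ℕ → (Fin N → ℝ) → ℝ) (m : (Fin N → ℝ) → ℝ)
    (C : ℝ) (hmbd : ∀ᵐ x ∂(volume.restrict Ω), |m x| ≤ C)
    (hmnbd : ∀ n, ∀ᵐ x ∂(volume.restrict Ω), |mn n x| ≤ C)
    -- weak* convergence in L^∞
    (hweak : ∀ g : (Fin N → ℝ) → ℝ, Integrable g (volume.restrict Ω) →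
      Tendsto (fun n => ∫ x, mn n x * g x ∂(volume.restrict Ω)) atTop
        (nhds (∫ x, m x * g x ∂(volume.restrict Ω))))
    (Mn : ℕ → Lp ℝ p (volume.restrict Ω) →L[ℝ] Lp ℝ p (volume.restrict Ω))
    (M : Lp ℝ p (volume.restrict Ω) →L[ℝ] Lp ℝ p (volume.restrict Ω))
    (hMn : ∀ n, ∀ u : Lp ℝ p (volume.restrict Ω),
      (Mn n u : (Fin N → ℝ) → ℝ) =ᵐ[volume.restrict Ω] fun x => mn n x * (u : (Fin N → ℝ) → ℝ) x)
    (hM : ∀ u : Lp ℝ p (volume.restrict Ω),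
      (M u : (Fin N → ℝ) → ℝ) =ᵐ[volume.restrict Ω] fun x => m x * (u : (Fin N → ℝ) → ℝ) x)
    (R : Lp ℝ p (volume.restrict Ω) →L[ℝ] Lp ℝ p (volume.restrict Ω))
    (hR : IsResolventOf (pmapAdd A M) ω R) (hRcomp : IsCompactOperator R)
    (Rn : ℕ → Lp ℝ p (volume.restrict Ω) →L[ℝ] Lp ℝ p (volume.restrict Ω))
    (hRn : ∀ n, IsResolventOf (pmapAdd A (Mn n)) ω (Rn n))
    (hbdd : ∃ K : ℝ, ∀ n, ‖Rn n‖ ≤ K) :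
    Tendsto (fun n => ‖R.comp ((Mn n - M).comp R)‖) atTop (nhds 0) ∧
      Tendsto Rn atTop (nhds R) :=
  stmt_10_general Ω hΩb p hp A ω mn m C hmbd hmnbd hweak Mn M hMn hM R hR hRcomp Rn hRn hbdd
end

section
/- (Abstract Kato inequality) Let Ω ⊆ ℝᴺ be a bounded domain and E = L^p(Ω) with 1 ≤ p < ∞. Let -A generate a positive C₀-semigroup (T(t)) on E. Then for all u ∈ D(A) and all φ ∈ D(A') with φ ≥ 0, one has ⟨1_{{u>0}} Au, φ⟩ ≥ ⟨u⁺, A'φ⟩. -/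
open MeasureTheory

open Filter Set

open scoped ENNReal

/-!
For `t > 0` the Bochner integral `v_t = ∫₀ᵗ T(s)u⁺ ds` lies in `D(A)` with `A v_t = u⁺ - T(t)u⁺`.
Positivity of `T(t)` gives `T(t)u⁺ ≥ 0` and `T(t)u⁺ ≥ T(t)u`, hence, pointwise,
`u⁺ - T(t)u⁺ ≤ 1_{u>0} (u - T(t)u)`. Pairing with `φ ≥ 0` and dividing by `t`,
`⟨t⁻¹ v_t, A'φ⟩ ≤ ⟨1_{u>0} t⁻¹(u - T(t)u), φ⟩`, and letting `t ↓ 0` gives the inequality, since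
`t⁻¹ v_t → u⁺` and multiplication by `1_{u>0}` is a bounded operator on `Lᵖ`.
-/

open MeasureTheory Filter Set Topology

section RightAverage

variable {E : Type*} [NormedAddCommGroup E] [NormedSpace ℝ E] [CompleteSpace E]

theorem ContinuousOn.tendsto_smul_integral_right {f : ℝ → E} {a : ℝ} (hf : ContinuousOn f (Ici a)) :
    Tendsto (fun h : ℝ => h⁻¹ • ∫ s in a..a + h, f s) (𝓝[>] 0) (𝓝 (f a)) := by
  have hderiv : HasDerivWithinAt (fun y => ∫ s in a..y, f s) (f a) (Ici a) a :=
    intervalIntegral.integral_hasDerivWithinAt_right IntervalIntegrable.refl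
      ⟨Ici a, mem_of_superset self_mem_nhdsWithin Ioi_subset_Ici_self,
        hf.aestronglyMeasurable measurableSet_Ici⟩
      ((hf.continuousWithinAt self_mem_Ici).mono Ioi_subset_Ici_self)
  have hshift : Tendsto (a + ·) (𝓝[>] 0) (𝓝[Ici a \ {a}] a) := by
    rw [Ici_sdiff_left]
    refine tendsto_nhdsWithin_of_tendsto_nhds_of_eventually_within _ ?_ ?_
    · simpa using (continuous_const_add a).continuousAt.tendsto.mono_left
        (nhdsWithin_le_nhds (a := (0 : ℝ)))
    · filter_upwards [self_mem_nhdsWithin] with h (hh : 0 < h)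
      exact lt_add_of_pos_right a hh
  refine ((hasDerivWithinAt_iff_tendsto_slope.1 hderiv).comp hshift).congr fun h => ?_
  simp [slope_def_module, intervalIntegral.integral_same]

end RightAverage

namespace C0Semigroup

variable {E : Type*} [NormedAddCommGroup E] [NormedSpace ℝ E] (T : C0Semigroup E) (v : E)

theorem apply_zero : T.toFun 0 v = v := by
  rw [T.map_zero]
  rfl

theorem intervalIntegrable_orbit {a b : ℝ} (ha : 0 ≤ a) (hb : 0 ≤ b) :
    IntervalIntegrable (fun s => T.toFun s v) volume a b :=
  (T.strong_cont v).mono (fun _ hx => (le_inf ha hb).trans hx.1) |>.intervalIntegrable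

variable [CompleteSpace E]

theorem tendsto_smul_integral_orbit :
    Tendsto (fun t : ℝ => t⁻¹ • ∫ s in (0 : ℝ)..t, T.toFun s v) (𝓝[>] 0) (𝓝 v) := by
  simpa [T.apply_zero] using (T.strong_cont v).tendsto_smul_integral_right

/-- `T(h)` shifts the window of integration `[0, t]` to `[h, t + h]`. -/
theorem integral_orbit_sub_apply_integral_orbit {t h : ℝ} (ht : 0 ≤ t) (hh : 0 ≤ h) :
    (∫ s in (0 : ℝ)..t, T.toFun s v) - T.toFun h (∫ s in (0 : ℝ)..t, T.toFun s v) =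
      (∫ s in (0 : ℝ)..h, T.toFun s v) - ∫ s in t..t + h, T.toFun s v := by
  have hshift : T.toFun h (∫ s in (0 : ℝ)..t, T.toFun s v) = ∫ s in h..t + h, T.toFun s v :=
    calc T.toFun h (∫ s in (0 : ℝ)..t, T.toFun s v)
        = ∫ s in (0 : ℝ)..t, T.toFun (s + h) v := by
          rw [← (T.toFun h).intervalIntegral_comp_comm (T.intervalIntegrable_orbit v le_rfl ht)]
          refine intervalIntegral.integral_congr fun s hs => ?_
          rw [uIcc_of_le ht] at hs
          simp only [add_comm s, T.map_add h s hh hs.1, ContinuousLinearMap.comp_apply]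
      _ = ∫ s in h..t + h, T.toFun s v := by
          simpa using intervalIntegral.integral_comp_add_right (a := 0) (b := t)
            (fun s => T.toFun s v) h
  have hsplit := intervalIntegral.integral_add_adjacent_intervals
    (T.intervalIntegrable_orbit v le_rfl hh) (T.intervalIntegrable_orbit v hh (add_nonneg ht hh))
  have hsplit' := intervalIntegral.integral_add_adjacent_intervals
    (T.intervalIntegrable_orbit v le_rfl ht) (T.intervalIntegrable_orbit v ht (add_nonneg ht hh))
  rw [hshift, sub_eq_sub_iff_add_eq_add, hsplit, ← hsplit', add_comm]

theorem tendsto_smul_sub_apply_integral_orbit {t : ℝ} (ht : 0 ≤ t) :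
    Tendsto (fun h : ℝ => h⁻¹ • ((∫ s in (0 : ℝ)..t, T.toFun s v) -
      T.toFun h (∫ s in (0 : ℝ)..t, T.toFun s v))) (𝓝[>] 0) (𝓝 (v - T.toFun t v)) := by
  refine ((T.tendsto_smul_integral_orbit v).sub
    ((T.strong_cont v).mono (Ici_subset_Ici.2 ht)).tendsto_smul_integral_right).congr' ?_
  filter_upwards [self_mem_nhdsWithin] with h (hh : 0 < h)
  rw [T.integral_orbit_sub_apply_integral_orbit v ht hh.le, smul_sub]

end C0Semigroup

namespace IsNegGenerator

variable {E : Type*} [NormedAddCommGroup E] [NormedSpace ℝ E] [CompleteSpace E]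
  {T : C0Semigroup E} {A : E →ₗ.[ℝ] E}

theorem integral_orbit_mem_domain (hgen : IsNegGenerator T A) (v : E) {t : ℝ} (ht : 0 ≤ t) :
    (∫ s in (0 : ℝ)..t, T.toFun s v) ∈ A.domain :=
  hgen.2 _ ⟨_, T.tendsto_smul_sub_apply_integral_orbit v ht⟩

theorem apply_integral_orbit (hgen : IsNegGenerator T A) (v : E) {t : ℝ} (ht : 0 ≤ t) :
    A ⟨_, hgen.integral_orbit_mem_domain v ht⟩ = v - T.toFun t v :=
  tendsto_nhds_unique (hgen.1 _) (T.tendsto_smul_sub_apply_integral_orbit v ht)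

end IsNegGenerator

namespace MeasureTheory.Lp

variable {α : Type*} {m : MeasurableSpace α} {μ : Measure α} {p : ℝ≥0∞} {s : Set α}

section Indicator

variable {𝕜 E : Type*} [NormedField 𝕜] [NormedAddCommGroup E] [NormedSpace 𝕜 E]

noncomputable def indicator (hs : MeasurableSet s) (f : Lp E p μ) : Lp E p μ :=
  ((Lp.memLp f).indicator hs).toLp _

theorem coeFn_indicator (hs : MeasurableSet s) (f : Lp E p μ) :
    indicator hs f =ᵐ[μ] s.indicator f :=
  MemLp.coeFn_toLp _

theorem norm_indicator_le (hs : MeasurableSet s) (f : Lp E p μ) : ‖indicator hs f‖ ≤ ‖f‖ := by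
  rw [indicator, Lp.norm_toLp, Lp.norm_def]
  exact ENNReal.toReal_mono (Lp.eLpNorm_ne_top f) (eLpNorm_indicator_le _)

variable (𝕜) in
noncomputable def indicatorL [Fact (1 ≤ p)] (hs : MeasurableSet s) : Lp E p μ →L[𝕜] Lp E p μ :=
  LinearMap.mkContinuous
    { toFun := indicator hs
      map_add' := fun f g => by
        refine Lp.ext ?_
        filter_upwards [coeFn_indicator hs (f + g), coeFn_indicator hs f, coeFn_indicator hs g,
          Lp.coeFn_add f g, Lp.coeFn_add (indicator hs f) (indicator hs g)] with x h h1 h2 h3 h4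
        rw [h, h4, Pi.add_apply, h1, h2]
        by_cases hx : x ∈ s
        · simp only [indicator_of_mem hx, h3, Pi.add_apply]
        · simp only [indicator_of_notMem hx, add_zero]
      map_smul' := fun c f => by
        refine Lp.ext ?_
        filter_upwards [coeFn_indicator hs (c • f), coeFn_indicator hs f, Lp.coeFn_smul c f,
          Lp.coeFn_smul c (indicator hs f)] with x h h1 h2 h3
        rw [h, RingHom.id_apply, h3, Pi.smul_apply, h1]
        by_cases hx : x ∈ s
        · simp only [indicator_of_mem hx, h2, Pi.smul_apply]
        · simp only [indicator_of_notMem hx, smul_zero] }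
    1 fun f => by simpa using norm_indicator_le hs f

theorem indicatorL_apply [Fact (1 ≤ p)] (hs : MeasurableSet s) (f : Lp E p μ) :
    indicatorL 𝕜 hs f = indicator hs f :=
  rfl

end Indicator

theorem measurableSet_pos (f : Lp ℝ p μ) : MeasurableSet {x | 0 < f x} :=
  measurableSet_lt measurable_const (Lp.stronglyMeasurable f).measurable

theorem sup_zero_sub_le_indicatorL_sub [Fact (1 ≤ p)] (f : Lp ℝ p μ) {g h : Lp ℝ p μ}
    (hg : 0 ≤ g) (hhg : h ≤ g) :
    f ⊔ 0 - g ≤ indicatorL ℝ (measurableSet_pos f) (f - h) := by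
  rw [indicatorL_apply, ← Lp.coeFn_le]
  filter_upwards [Lp.coeFn_sub (f ⊔ 0) g, Lp.coeFn_sup f 0, Lp.coeFn_zero ℝ p μ,
    coeFn_indicator (measurableSet_pos f) (f - h), Lp.coeFn_sub f h,
    (Lp.coeFn_nonneg g).2 hg, (Lp.coeFn_le h g).2 hhg] with x h1 h2 h3 h4 h5 hgx hhgx
  rw [h1, Pi.sub_apply, h2, Pi.sup_apply, h3, h4]
  simp only [Pi.zero_apply, indicator_apply, mem_ofPred_eq] at hgx ⊢
  split_ifs with hfx
  · rw [max_eq_left hfx.le, h5, Pi.sub_apply]; linarith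
  · rw [max_eq_right (not_lt.1 hfx)]; linarith

end MeasureTheory.Lp

namespace IsNegGenerator

variable {α : Type*} {m : MeasurableSpace α} {μ : Measure α} {p : ℝ≥0∞} [Fact (1 ≤ p)]
  {T : C0Semigroup (Lp ℝ p μ)} {A : Lp ℝ p μ →ₗ.[ℝ] Lp ℝ p μ}

theorem kato_inequality (hgen : IsNegGenerator T A)
    (hTpos : ∀ t : ℝ, 0 ≤ t → ∀ f, 0 ≤ f → 0 ≤ T.toFun t f) (u : A.domain)
    {φ ψ : Lp ℝ p μ →L[ℝ] ℝ} (hφpos : ∀ f, 0 ≤ f → 0 ≤ φ f)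
    (hadj : ∀ v : A.domain, φ (A v) = ψ v) :
    ψ ((u : Lp ℝ p μ) ⊔ 0) ≤ φ (Lp.indicatorL ℝ (Lp.measurableSet_pos (u : Lp ℝ p μ)) (A u)) := by
  set P : Lp ℝ p μ →L[ℝ] Lp ℝ p μ := Lp.indicatorL ℝ (Lp.measurableSet_pos (u : Lp ℝ p μ))
  set v : Lp ℝ p μ := (u : Lp ℝ p μ) ⊔ 0
  have hlhs : Tendsto (fun t : ℝ => ψ (t⁻¹ • ∫ s in (0 : ℝ)..t, T.toFun s v)) (𝓝[>] 0)
      (𝓝 (ψ v)) :=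
    (ψ.continuous.tendsto v).comp (T.tendsto_smul_integral_orbit v)
  have hrhs : Tendsto (fun t : ℝ => φ (P (t⁻¹ • ((u : Lp ℝ p μ) - T.toFun t u)))) (𝓝[>] 0)
      (𝓝 (φ (P (A u)))) :=
    ((φ.comp P).continuous.tendsto _).comp (hgen.1 u)
  refine le_of_tendsto_of_tendsto hlhs hrhs ?_
  filter_upwards [self_mem_nhdsWithin] with t (ht : 0 < t)
  have hTmono : Monotone (T.toFun t) := (monotone_iff_map_nonneg _).2 (hTpos t ht.le)
  have hle : v - T.toFun t v ≤ P ((u : Lp ℝ p μ) - T.toFun t u) :=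
    Lp.sup_zero_sub_le_indicatorL_sub _ (hTpos t ht.le v le_sup_right) (hTmono le_sup_left)
  calc ψ (t⁻¹ • ∫ s in (0 : ℝ)..t, T.toFun s v)
      = t⁻¹ * φ (v - T.toFun t v) := by
        rw [map_smul, ← hadj ⟨_, hgen.integral_orbit_mem_domain v ht.le⟩,
          hgen.apply_integral_orbit v ht.le, smul_eq_mul]
    _ ≤ t⁻¹ * φ (P ((u : Lp ℝ p μ) - T.toFun t u)) :=
        mul_le_mul_of_nonneg_left ((monotone_iff_map_nonneg φ).2 hφpos hle) (inv_nonneg.2 ht.le)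
    _ = φ (P (t⁻¹ • ((u : Lp ℝ p μ) - T.toFun t u))) := by rw [map_smul, map_smul, smul_eq_mul]

end IsNegGenerator

theorem stmt_12_general {N : ℕ} (Ω : Set (Fin N → ℝ))
    (p : ℝ≥0∞) [Fact (1 ≤ p)]
    (T : C0Semigroup (Lp ℝ p (volume.restrict Ω)))
    (A : Lp ℝ p (volume.restrict Ω) →ₗ.[ℝ] Lp ℝ p (volume.restrict Ω))
    (hgen : IsNegGenerator T A)
    (hTpos : ∀ t : ℝ, 0 ≤ t → ∀ f, 0 ≤ f → 0 ≤ T.toFun t f)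
    (u : A.domain)
    -- φ ∈ D(A')₊ with A'φ = ψ, i.e. ⟨Av, φ⟩ = ⟨v, ψ⟩ for all v ∈ D(A)
    (φ ψ : Lp ℝ p (volume.restrict Ω) →L[ℝ] ℝ)
    (hφpos : ∀ f, 0 ≤ f → 0 ≤ φ f)
    (hadj : ∀ v : A.domain, φ (A v) = ψ (v : Lp ℝ p (volume.restrict Ω)))
    -- w = 1_{u>0}·Au
    (w : Lp ℝ p (volume.restrict Ω))
    (hw : (w : (Fin N → ℝ) → ℝ) =ᵐ[volume.restrict Ω] fun x =>
      if 0 < ((u : Lp ℝ p (volume.restrict Ω)) : (Fin N → ℝ) → ℝ) x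
        then ((A u : Lp ℝ p (volume.restrict Ω)) : (Fin N → ℝ) → ℝ) x else 0) :
    ψ ((u : Lp ℝ p (volume.restrict Ω)) ⊔ 0) ≤ φ w := by
  have hS := Lp.measurableSet_pos (u : Lp ℝ p (volume.restrict Ω))
  have hw' : w = Lp.indicatorL ℝ hS (A u) := by
    refine Lp.ext (hw.trans ?_)
    filter_upwards [Lp.coeFn_indicator hS (A u)] with x hx
    rw [Lp.indicatorL_apply, hx]
    rfl
  exact hw' ▸ hgen.kato_inequality hTpos u hφpos hadj

/-- Abstract Kato inequality: if `-A` generates a positive C₀-semigroup on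
`L^p(Ω)`, then `⟨1_{u>0}·Au, φ⟩ ≥ ⟨u⁺, A'φ⟩` for `u ∈ D(A)` and `0 ≤ φ ∈ D(A')`. -/
theorem stmt_12 {N : ℕ} (Ω : Set (Fin N → ℝ)) (hΩo : IsOpen Ω)
    (hΩc : IsConnected Ω) (hΩb : Bornology.IsBounded Ω)
    (p : ℝ≥0∞) [Fact (1 ≤ p)] (hp : p ≠ ∞)
    (T : C0Semigroup (Lp ℝ p (volume.restrict Ω)))
    (A : Lp ℝ p (volume.restrict Ω) →ₗ.[ℝ] Lp ℝ p (volume.restrict Ω))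
    (hgen : IsNegGenerator T A)
    (hTpos : ∀ t : ℝ, 0 ≤ t → ∀ f, 0 ≤ f → 0 ≤ T.toFun t f)
    (u : A.domain)
    -- φ ∈ D(A')₊ with A'φ = ψ, i.e. ⟨Av, φ⟩ = ⟨v, ψ⟩ for all v ∈ D(A)
    (φ ψ : Lp ℝ p (volume.restrict Ω) →L[ℝ] ℝ)
    (hφpos : ∀ f, 0 ≤ f → 0 ≤ φ f)
    (hadj : ∀ v : A.domain, φ (A v) = ψ (v : Lp ℝ p (volume.restrict Ω)))
    -- w = 1_{u>0}·Au
    (w : Lp ℝ p (volume.restrict Ω))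
    (hw : (w : (Fin N → ℝ) → ℝ) =ᵐ[volume.restrict Ω] fun x =>
      if 0 < ((u : Lp ℝ p (volume.restrict Ω)) : (Fin N → ℝ) → ℝ) x
        then ((A u : Lp ℝ p (volume.restrict Ω)) : (Fin N → ℝ) → ℝ) x else 0) :
    ψ ((u : Lp ℝ p (volume.restrict Ω)) ⊔ 0) ≤ φ w :=
  stmt_12_general Ω p T A hgen hTpos u φ ψ hφpos hadj w hw
end

section
/- Suppose 0 < u ∈ D(A) solves Au = λu − m·g(·,u)·u for some λ ∈ ℝ, where -A generates a positive irreducible holomorphic, ultra-contractive, locally smoothing C₀-semigroup on L^p(Ω), Ω bounded. Then for every ω > -λ₁(A) one has 0 < u ≤ (λ+ω)(ωI + A)^{-1}u, and by iterating, 0 < u ≤ e^{λt} T(t)u for all t > 0; in particular u ∈ L^∞(Ω). -/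
/-!
Since `m g(·,u) u ≥ 0`, the solution is a subsolution: `Au ≤ λu`. Positivity of the resolvent
turns `(ω + A)u ≤ (λ + ω)u` into `u ≤ (λ + ω)(ω + A)⁻¹u`. For the semigroup bound, the map
`r ↦ e^{λr} T(r)u` has right derivative `e^{λr} T(r)(λu - Au) ≥ 0`; testing against the positive
functionals, which separate points from the closed positive cone by Hahn–Banach, reduces its
monotonicity to the scalar case. Boundedness of `u` then comes from ultracontractivity of `T(1)`.
-/

open MeasureTheory Filter Set

open Filter Set

open scoped ENNReal

section OrderedNormedSpace

variable {E : Type*} [NormedAddCommGroup E] [NormedSpace ℝ E] [PartialOrder E]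
  [IsOrderedAddMonoid E] [PosSMulMono ℝ E] [ClosedIciTopology E]

theorem exists_nonneg_clm_apply_neg_of_not_nonneg {x : E} (hx : ¬0 ≤ x) :
    ∃ φ : E →L[ℝ] ℝ, (∀ y, 0 ≤ y → 0 ≤ φ y) ∧ φ x < 0 := by
  obtain ⟨f, c, hf, hc⟩ :=
    geometric_hahn_banach_closed_point (convex_Ici (0 : E)) isClosed_Ici hx
  -- `f < c` on a cone forces `f ≤ 0` there
  have hf_nonpos : ∀ y, 0 ≤ y → f y ≤ 0 := by
    intro y hy
    by_contra! hfy
    obtain ⟨n, hn⟩ := exists_nat_gt (c / f y)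
    have := hf ((n : ℝ) • y) (smul_nonneg n.cast_nonneg hy)
    rw [map_smul, smul_eq_mul] at this
    rw [div_lt_iff₀ hfy] at hn
    linarith
  have hc_pos : 0 < c := by simpa using hf 0 le_rfl
  exact ⟨-f, fun y hy => by simpa using hf_nonpos y hy, by rw [neg_apply]; linarith⟩

theorem image_le_of_hasDerivWithinAt_Ici_nonneg {F F' : ℝ → E} {a b : ℝ} (hab : a ≤ b)
    (hF : ContinuousOn F (Icc a b))
    (hF' : ∀ s ∈ Ico a b, HasDerivWithinAt F (F' s) (Ici s) s)
    (hF'_nonneg : ∀ s ∈ Ico a b, 0 ≤ F' s) : F a ≤ F b := by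
  rw [← sub_nonneg]
  by_contra hneg
  obtain ⟨φ, hφ, hφF⟩ := exists_nonneg_clm_apply_neg_of_not_nonneg hneg
  have hmono : φ (F a) ≤ φ (F b) :=
    image_le_of_deriv_right_le_deriv_boundary (f := fun _ => φ (F a)) (f' := 0)
      continuousOn_const (fun s _ => hasDerivWithinAt_const s _ _) le_rfl
      (φ.continuous.comp_continuousOn hF)
      (fun s hs => φ.hasFDerivAt.comp_hasDerivWithinAt s (hF' s hs))
      (fun s hs => hφ _ (hF'_nonneg s hs)) (right_mem_Icc.2 hab)
  rw [map_sub] at hφF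
  linarith

end OrderedNormedSpace

namespace MeasureTheory.Lp

variable {α : Type*} [MeasurableSpace α] {μ : Measure α} {p : ℝ≥0∞}

instance : PosSMulMono ℝ (Lp ℝ p μ) :=
  PosSMulMono.of_smul_nonneg fun c hc f hf => by
    rw [← Lp.coeFn_nonneg] at hf ⊢
    filter_upwards [Lp.coeFn_smul c f, hf] with x hcf hfx
    rw [hcf]
    exact smul_nonneg hc hfx

theorem memLp_top_of_le {f g : Lp ℝ p μ} (hf : 0 ≤ f) (hfg : f ≤ g)
    (hg : MemLp (g : α → ℝ) ∞ μ) : MemLp (f : α → ℝ) ∞ μ := by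
  refine hg.of_le (Lp.aestronglyMeasurable f) ?_
  filter_upwards [(Lp.coeFn_nonneg f).2 hf, (Lp.coeFn_le f g).2 hfg] with x hfx hfgx
  rw [Real.norm_of_nonneg hfx]
  exact hfgx.trans (le_abs_self _)

end MeasureTheory.Lp

namespace C0Semigroup

variable {E : Type*} [NormedAddCommGroup E] [NormedSpace ℝ E] (T : C0Semigroup E)

theorem apply_add {s t : ℝ} (hs : 0 ≤ s) (ht : 0 ≤ t) (u : E) :
    T.toFun (s + t) u = T.toFun s (T.toFun t u) := by
  rw [T.map_add s t hs ht, ContinuousLinearMap.comp_apply]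

theorem hasDerivWithinAt_apply {A : E →ₗ.[ℝ] E} (hA : IsNegGenerator T A) (u : A.domain)
    {s : ℝ} (hs : 0 ≤ s) :
    HasDerivWithinAt (fun r => T.toFun r u) (-T.toFun s (A u)) (Ici s) s := by
  rw [← hasDerivWithinAt_Ioi_iff_Ici,
    hasDerivWithinAt_iff_tendsto_slope' (s := Ioi s) (lt_irrefl s), ← add_zero s, ← Filter.map_add_left_nhdsGT, add_zero, tendsto_map'_iff]
  refine (((T.toFun s).continuous.tendsto _).comp (hA.1 u)).neg.congr' ?_
  filter_upwards [self_mem_nhdsWithin] with t (ht : 0 < t)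
  simp [slope, T.apply_add hs ht.le, smul_sub]

variable [PartialOrder E] [IsOrderedAddMonoid E] [PosSMulMono ℝ E] [ClosedIciTopology E]

theorem le_exp_smul_apply_of_le {A : E →ₗ.[ℝ] E} (hA : IsNegGenerator T A)
    (hT : ∀ t, 0 ≤ t → ∀ f, 0 ≤ f → 0 ≤ T.toFun t f) {c : ℝ} (u : A.domain)
    (hu : A u ≤ c • (u : E)) {t : ℝ} (ht : 0 ≤ t) :
    (u : E) ≤ Real.exp (c * t) • T.toFun t u := by
  have hderiv : ∀ s, 0 ≤ s → HasDerivWithinAt (fun r => Real.exp (c * r) • T.toFun r u)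
      (Real.exp (c * s) • T.toFun s (c • (u : E) - A u)) (Ici s) s := by
    intro s hs
    have hexp : HasDerivAt (fun r => Real.exp (c * r)) (Real.exp (c * s) * c) s := by
      simpa using ((hasDerivAt_id s).const_mul c).exp
    refine (hexp.hasDerivWithinAt.smul (T.hasDerivWithinAt_apply hA u hs)).congr_deriv ?_
    rw [map_sub, map_smul]
    module
  have hmono := image_le_of_hasDerivWithinAt_Ici_nonneg ht
    (((Real.continuous_exp.comp (continuous_const_mul c)).continuousOn).smul
      ((T.strong_cont u).mono Icc_subset_Ici_self))
    (fun s hs => hderiv s hs.1)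
    (fun s hs => smul_nonneg (Real.exp_pos _).le (hT s hs.1 _ (sub_nonneg.2 hu)))
  simpa [T.map_zero] using hmono

end C0Semigroup

theorem IsResolventOf.le_smul_apply_of_le {E : Type*} [NormedAddCommGroup E] [NormedSpace ℝ E]
    [PartialOrder E] [IsOrderedAddMonoid E] {A : E →ₗ.[ℝ] E} {ω : ℝ} {R : E →L[ℝ] E}
    (hR : IsResolventOf A ω R) (hR_nonneg : ∀ f, 0 ≤ f → 0 ≤ R f) {c : ℝ} (u : A.domain)
    (hu : A u ≤ c • (u : E)) : (u : E) ≤ (c + ω) • R u := by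
  have h := hR_nonneg _ (sub_nonneg.2 (add_le_add_right hu (ω • (u : E))))
  rw [map_sub, hR.left_inv, map_add, map_smul, map_smul, sub_nonneg] at h
  rwa [add_smul, add_comm]

theorem stmt_15_general {N : ℕ} (Ω : Set (Fin N → ℝ))
    (p : ℝ≥0∞) [Fact (1 ≤ p)]
    (T : C0Semigroup (Lp ℝ p (volume.restrict Ω)))
    (A : Lp ℝ p (volume.restrict Ω) →ₗ.[ℝ] Lp ℝ p (volume.restrict Ω))
    (hgen : IsNegGenerator T A)
    (hTpos : ∀ t : ℝ, 0 ≤ t → ∀ f, 0 ≤ f → 0 ≤ T.toFun t f)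
    (hultra : ∀ t : ℝ, 0 < t → ∀ u : Lp ℝ p (volume.restrict Ω),
      MemLp (T.toFun t u : (Fin N → ℝ) → ℝ) ∞ (volume.restrict Ω))
    -- the principal eigenvalue λ₁(A), characterised by its positive eigenvector
    (lam1 : ℝ)
    -- the data of the logistic nonlinearity
    (m : (Fin N → ℝ) → ℝ) (hm0 : ∀ x, 0 ≤ m x)
    (g : (Fin N → ℝ) → ℝ → ℝ)
    (hgnonneg : ∀ x, ∀ ξ : ℝ, 0 ≤ ξ → 0 ≤ g x ξ)
    -- a positive solution u of Au = λu - m g(·,u) u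
    (lam : ℝ) (u : Lp ℝ p (volume.restrict Ω)) (hu : 0 < u)
    (humem : u ∈ A.domain)
    (z : Lp ℝ p (volume.restrict Ω))
    (hz : (z : (Fin N → ℝ) → ℝ) =ᵐ[volume.restrict Ω] fun x =>
      m x * g x ((u : (Fin N → ℝ) → ℝ) x) * (u : (Fin N → ℝ) → ℝ) x)
    (heq : A ⟨u, humem⟩ = lam • u - z) :
    (∀ ω : ℝ, -lam1 < ω →
      ∀ R : Lp ℝ p (volume.restrict Ω) →L[ℝ] Lp ℝ p (volume.restrict Ω),
        IsResolventOf A ω R → (∀ f, 0 ≤ f → 0 ≤ R f) →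
          u ≤ (lam + ω) • R u) ∧
    (∀ t : ℝ, 0 < t → u ≤ Real.exp (lam * t) • T.toFun t u) ∧
    MemLp (u : (Fin N → ℝ) → ℝ) ∞ (volume.restrict Ω) := by
  have hz_nonneg : 0 ≤ z := by
    rw [← Lp.coeFn_nonneg]
    filter_upwards [hz, (Lp.coeFn_nonneg u).2 hu.le] with x hzx hux
    rw [Pi.zero_apply, hzx]
    exact mul_nonneg (mul_nonneg (hm0 x) (hgnonneg x _ hux)) hux
  have hsub : A ⟨u, humem⟩ ≤ lam • u := by
    rw [heq]
    exact sub_le_self _ hz_nonneg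
  have hexp : ∀ t : ℝ, 0 < t → u ≤ Real.exp (lam * t) • T.toFun t u := fun t ht =>
    T.le_exp_smul_apply_of_le hgen hTpos ⟨u, humem⟩ hsub ht.le
  refine ⟨fun ω _ R hR hR_nonneg => hR.le_smul_apply_of_le hR_nonneg ⟨u, humem⟩ hsub, hexp, ?_⟩
  exact Lp.memLp_top_of_le hu.le (hexp 1 one_pos)
    (((hultra 1 one_pos u).const_smul _).ae_eq (Lp.coeFn_smul _ _).symm)

/-- Regularity of positive solutions of the logistic equation
`Au = λu - m g(·,u) u`: any positive solution satisfies
`0 < u ≤ (λ+ω)(ω+A)⁻¹u` for all `ω > -λ₁(A)`, hence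
`0 < u ≤ e^{λ t}T(t)u` for all `t > 0`; in particular `u ∈ L^∞(Ω)`. -/
theorem stmt_15 {N : ℕ} (Ω : Set (Fin N → ℝ)) (hΩo : IsOpen Ω)
    (hΩc : IsConnected Ω) (hΩb : Bornology.IsBounded Ω)
    (p : ℝ≥0∞) [Fact (1 ≤ p)] (hp : p ≠ ∞)
    (T : C0Semigroup (Lp ℝ p (volume.restrict Ω)))
    (A : Lp ℝ p (volume.restrict Ω) →ₗ.[ℝ] Lp ℝ p (volume.restrict Ω))
    (hgen : IsNegGenerator T A)
    (hTpos : ∀ t : ℝ, 0 ≤ t → ∀ f, 0 ≤ f → 0 ≤ T.toFun t f)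
    (hTirr : ∀ f, 0 < f → ∀ φ : Lp ℝ p (volume.restrict Ω) →L[ℝ] ℝ,
      (∀ g, 0 ≤ g → 0 ≤ φ g) → φ ≠ 0 → ∃ t : ℝ, 0 < t ∧ 0 < φ (T.toFun t f))
    (hTholo : ∀ u : Lp ℝ p (volume.restrict Ω),
      AnalyticOn ℝ (fun t : ℝ => T.toFun t u) (Ioi 0))
    (hultra : ∀ t : ℝ, 0 < t → ∀ u : Lp ℝ p (volume.restrict Ω),
      MemLp (T.toFun t u : (Fin N → ℝ) → ℝ) ∞ (volume.restrict Ω))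
    (hsm : ∀ t : ℝ, 0 < t → ∀ u : Lp ℝ p (volume.restrict Ω),
      ∃ g : (Fin N → ℝ) → ℝ, ContinuousOn g Ω ∧
        (T.toFun t u : (Fin N → ℝ) → ℝ) =ᵐ[volume.restrict Ω] g)
    (hpt : ∀ x ∈ Ω, ∃ (w : Lp ℝ p (volume.restrict Ω)) (s : ℝ)
      (g : (Fin N → ℝ) → ℝ), 0 < s ∧ ContinuousOn g Ω ∧
        (T.toFun s w : (Fin N → ℝ) → ℝ) =ᵐ[volume.restrict Ω] g ∧ g x ≠ 0)
    -- the principal eigenvalue λ₁(A), characterised by its positive eigenvector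
    (lam1 : ℝ) (u₁ : Lp ℝ p (volume.restrict Ω)) (hu₁ : 0 < u₁)
    (hu₁mem : u₁ ∈ A.domain) (heig₁ : A ⟨u₁, hu₁mem⟩ = lam1 • u₁)
    -- the data of the logistic nonlinearity
    (m : (Fin N → ℝ) → ℝ) (hm0 : ∀ x, 0 ≤ m x) (hmbd : ∃ C : ℝ, ∀ x, |m x| ≤ C)
    (g : (Fin N → ℝ) → ℝ → ℝ)
    (hgc : Continuous fun q : (Fin N → ℝ) × ℝ => g q.1 q.2)
    (hg0 : ∀ x, g x 0 = 0)
    (hgmono : ∀ x, MonotoneOn (g x) (Ici (0 : ℝ)))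
    (hgnonneg : ∀ x, ∀ ξ : ℝ, 0 ≤ ξ → 0 ≤ g x ξ)
    -- a positive solution u of Au = λu - m g(·,u) u
    (lam : ℝ) (u : Lp ℝ p (volume.restrict Ω)) (hu : 0 < u)
    (humem : u ∈ A.domain)
    (z : Lp ℝ p (volume.restrict Ω))
    (hz : (z : (Fin N → ℝ) → ℝ) =ᵐ[volume.restrict Ω] fun x =>
      m x * g x ((u : (Fin N → ℝ) → ℝ) x) * (u : (Fin N → ℝ) → ℝ) x)
    (heq : A ⟨u, humem⟩ = lam • u - z) :
    (∀ ω : ℝ, -lam1 < ω →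
      ∀ R : Lp ℝ p (volume.restrict Ω) →L[ℝ] Lp ℝ p (volume.restrict Ω),
        IsResolventOf A ω R → (∀ f, 0 ≤ f → 0 ≤ R f) →
          u ≤ (lam + ω) • R u) ∧
    (∀ t : ℝ, 0 < t → u ≤ Real.exp (lam * t) • T.toFun t u) ∧
    MemLp (u : (Fin N → ℝ) → ℝ) ∞ (volume.restrict Ω) :=
  stmt_15_general Ω p T A hgen hTpos hultra lam1 m hm0 g hgnonneg lam u hu humem z hz heq
end
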